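/- (Stable decomposition bound for GenEO with inexact coarse solve) Assume: ∑_{i=1}^N R_iᵀ D_i R_i = I (partition of unity); ‖∑_{i=1}^N R_iᵀ U_i‖_A² ≤ k₀ ∑_{i=1}^N ‖R_iᵀ U_i‖_A² for all U_i ∈ ℝ^{n_i}; and, for given linear maps π̃_j : ℝ^{n_j} → ℝ^{n_j}, the inequality ∑_{j=1}^N ⟨R_j A R_jᵀ D_j (I − π̃_j) R_j U, D_j (I − π̃_j) R_j U⟩ ≤ k₁ τ ⟨A U, U⟩ holds for all U ∈ ℝⁿ. Let ε_A := ‖P₀ − P̃₀‖_A and define F U := P₀ U + (P̃₀ − P₀) ∑_{j=1}^N R_jᵀ D_j (I − π̃_j) R_j U. Then for all U ∈ ℝⁿ: ⟨A (F U), F U⟩ ≤ (1 + ε_A √(k₀ k₁ τ))² ⟨A U, U⟩. -/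

import Mathlib

/-!
`P₀` is the `A`-orthogonal projection onto `V₀`, hence an `A`-contraction. The correction
`(P̃₀ - P₀) w` has `A`-norm at most `ε_A ‖w‖_A`, where `w = ∑ R_jᵀ D_j (I - π̃_j) R_j U`; the
`k₀`-bound applied to the local pieces, followed by the GenEO bound, gives
`‖w‖_A² ≤ k₀ k₁ τ ‖U‖_A²`. The triangle inequality for `‖·‖_A` then yields
`‖F U‖_A ≤ (1 + ε_A √(k₀ k₁ τ)) ‖U‖_A`. All facts about `‖·‖_A` come from `‖x‖_A = ‖√A x‖₂`.
-/

open Matrix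

/-- The norm induced by an SPD matrix `A`: `‖x‖_A = √(⟨A x, x⟩)`. -/
noncomputable def aNorm {n : ℕ} (A : Matrix (Fin n) (Fin n) ℝ) (x : Fin n → ℝ) : ℝ :=
  Real.sqrt ((A *ᵥ x) ⬝ᵥ x)

/-- The operator norm of a matrix `M` induced by the `A`-norm. -/
noncomputable def aOpNorm {n : ℕ} (A M : Matrix (Fin n) (Fin n) ℝ) : ℝ :=
  sSup { t : ℝ | ∃ x : Fin n → ℝ, x ≠ 0 ∧ t = aNorm A (M *ᵥ x) / aNorm A x }

open WithLp
open scoped MatrixOrder RealInnerProductSpace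

lemma dotProduct_mulVec_eq_inner_sqrt {ι : Type*} [Fintype ι] [DecidableEq ι]
    {A : Matrix ι ι ℝ} (hA : A.PosSemidef) (x y : ι → ℝ) :
    (A *ᵥ x) ⬝ᵥ y = ⟪toLp 2 (CFC.sqrt A *ᵥ x), toLp 2 (CFC.sqrt A *ᵥ y)⟫ := by
  have hB : (CFC.sqrt A)ᵀ = CFC.sqrt A := by
    simpa [Matrix.IsHermitian] using (CFC.sqrt_nonneg A).posSemidef.1
  rw [real_inner_comm, EuclideanSpace.inner_toLp_toLp, star_trivial, dotProduct_mulVec,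
    ← mulVec_transpose, hB, mulVec_mulVec, CFC.sqrt_mul_sqrt_self A hA.nonneg]

lemma mulVec_mulVec_dotProduct_mulVec {R ι κ : Type*} [CommSemiring R] [Fintype ι] [Fintype κ]
    (A : Matrix ι ι R) (P : Matrix ι κ R) (v : κ → R) :
    (A *ᵥ (P *ᵥ v)) ⬝ᵥ (P *ᵥ v) = ((Pᵀ * A * P) *ᵥ v) ⬝ᵥ v := by
  rw [dotProduct_mulVec, ← mulVec_transpose, mulVec_mulVec, mulVec_mulVec, Matrix.mul_assoc]

section ANorm

variable {n : ℕ} {A : Matrix (Fin n) (Fin n) ℝ}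

lemma aNorm_eq_norm_sqrt (hA : A.PosSemidef) (x : Fin n → ℝ) :
    aNorm A x = ‖toLp 2 (CFC.sqrt A *ᵥ x)‖ := by
  rw [aNorm, dotProduct_mulVec_eq_inner_sqrt hA, real_inner_self_eq_norm_sq,
    Real.sqrt_sq (norm_nonneg _)]

lemma aNorm_sq (hA : A.PosSemidef) (x : Fin n → ℝ) : aNorm A x ^ 2 = (A *ᵥ x) ⬝ᵥ x := by
  rw [aNorm_eq_norm_sqrt hA, dotProduct_mulVec_eq_inner_sqrt hA, real_inner_self_eq_norm_sq]

lemma dotProduct_mulVec_le_aNorm_mul_aNorm (hA : A.PosSemidef) (x y : Fin n → ℝ) :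
    (A *ᵥ x) ⬝ᵥ y ≤ aNorm A x * aNorm A y := by
  rw [dotProduct_mulVec_eq_inner_sqrt hA, aNorm_eq_norm_sqrt hA, aNorm_eq_norm_sqrt hA]
  exact real_inner_le_norm _ _

lemma aNorm_add_le (hA : A.PosSemidef) (x y : Fin n → ℝ) :
    aNorm A (x + y) ≤ aNorm A x + aNorm A y := by
  simp only [aNorm_eq_norm_sqrt hA, mulVec_add, toLp_add]
  exact norm_add_le _ _

lemma aNorm_nonneg (A : Matrix (Fin n) (Fin n) ℝ) (x : Fin n → ℝ) : 0 ≤ aNorm A x :=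
  Real.sqrt_nonneg _

lemma aNorm_neg (A : Matrix (Fin n) (Fin n) ℝ) (x : Fin n → ℝ) : aNorm A (-x) = aNorm A x := by
  simp [aNorm, mulVec_neg]

lemma aOpNorm_nonneg (A M : Matrix (Fin n) (Fin n) ℝ) : 0 ≤ aOpNorm A M :=
  Real.sSup_nonneg <| by
    rintro t ⟨x, -, rfl⟩
    exact div_nonneg (aNorm_nonneg A _) (aNorm_nonneg A x)

lemma aNorm_pos (hA : A.PosDef) {x : Fin n → ℝ} (hx : x ≠ 0) : 0 < aNorm A x :=
  Real.sqrt_pos.mpr <| by simpa [dotProduct_comm] using hA.dotProduct_mulVec_pos hx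

/-- The ratios in `aOpNorm A M` are bounded by the Euclidean operator norm of `√A M √A⁻¹`,
so the supremum is finite. -/
lemma aNorm_mulVec_le_aOpNorm (hA : A.PosDef) (M : Matrix (Fin n) (Fin n) ℝ) (x : Fin n → ℝ) :
    aNorm A (M *ᵥ x) ≤ aOpNorm A M * aNorm A x := by
  set B := CFC.sqrt A
  have hB : IsUnit B.det := by
    have hA' : IsUnit (B * B).det := by
      rw [CFC.sqrt_mul_sqrt_self A hA.posSemidef.nonneg]
      exact isUnit_iff_ne_zero.mpr hA.det_pos.ne'
    rw [det_mul] at hA'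
    exact isUnit_of_mul_isUnit_left hA'
  set C := ‖toEuclideanCLM (𝕜 := ℝ) (B * M * B⁻¹)‖
  have hbound : ∀ y, aNorm A (M *ᵥ y) ≤ C * aNorm A y := by
    intro y
    have hconj : B *ᵥ (M *ᵥ y) = (B * M * B⁻¹) *ᵥ (B *ᵥ y) := by
      rw [mulVec_mulVec, mulVec_mulVec, Matrix.mul_assoc (B * M), nonsing_inv_mul _ hB,
        Matrix.mul_one]
    rw [aNorm_eq_norm_sqrt hA.posSemidef, aNorm_eq_norm_sqrt hA.posSemidef, hconj,
      ← toEuclideanCLM_toLp]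
    exact ContinuousLinearMap.le_opNorm _ _
  rcases eq_or_ne x 0 with rfl | hx
  · simp [aNorm]
  rw [← div_le_iff₀ (aNorm_pos hA hx)]
  refine le_csSup ⟨C, ?_⟩ ⟨x, hx, rfl⟩
  rintro t ⟨y, -, rfl⟩
  exact div_le_of_le_mul₀ (aNorm_nonneg A y) (norm_nonneg _) (hbound y)

end ANorm

section CoarseProjection

variable {n : ℕ} {A : Matrix (Fin n) (Fin n) ℝ} {ι : Type*} [Fintype ι] [DecidableEq ι]
  {Z : Matrix (Fin n) ι ℝ}

/-- `P₀ = Z E⁻¹ Zᵀ A` is `A`-self-adjoint and idempotent. -/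
lemma transpose_mul_mul_coarseProjection (hA : A.PosDef) (hZ : Function.Injective Z.mulVec) :
    (Z * (Zᵀ * A * Z)⁻¹ * Zᵀ * A)ᵀ * A * (Z * (Zᵀ * A * Z)⁻¹ * Zᵀ * A)
      = A * (Z * (Zᵀ * A * Z)⁻¹ * Zᵀ * A) := by
  have hE : (Zᵀ * A * Z).PosDef := by
    simpa [conjTranspose_eq_transpose_of_trivial] using hA.conjTranspose_mul_mul_same hZ
  have hAt : Aᵀ = A := by simpa [Matrix.IsHermitian] using hA.1
  have hEt : (Zᵀ * A * Z)⁻¹ᵀ = (Zᵀ * A * Z)⁻¹ := by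
    simpa [Matrix.IsHermitian] using hE.1.inv
  have hEinv : (Zᵀ * A * Z)⁻¹ * (Zᵀ * A * Z) = 1 :=
    nonsing_inv_mul _ (isUnit_iff_ne_zero.mpr hE.det_pos.ne')
  generalize (Zᵀ * A * Z)⁻¹ = F at hEt hEinv ⊢
  calc _ = A * Z * (F * (Zᵀ * A * Z)) * F * Zᵀ * A := by
        simp only [transpose_mul, transpose_transpose, hAt, hEt, Matrix.mul_assoc]
    _ = _ := by rw [hEinv, Matrix.mul_one]; simp only [Matrix.mul_assoc]

lemma aNorm_coarseProjection_le (hA : A.PosDef) (hZ : Function.Injective Z.mulVec)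
    (x : Fin n → ℝ) : aNorm A ((Z * (Zᵀ * A * Z)⁻¹ * Zᵀ * A) *ᵥ x) ≤ aNorm A x := by
  set P := Z * (Zᵀ * A * Z)⁻¹ * Zᵀ * A
  have hsq : aNorm A (P *ᵥ x) ^ 2 ≤ aNorm A (P *ᵥ x) * aNorm A x := by
    rw [aNorm_sq hA.posSemidef, mulVec_mulVec_dotProduct_mulVec,
      transpose_mul_mul_coarseProjection hA hZ, ← mulVec_mulVec]
    exact dotProduct_mulVec_le_aNorm_mul_aNorm hA.posSemidef _ _
  nlinarith [aNorm_nonneg A (P *ᵥ x), aNorm_nonneg A x]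

end CoarseProjection

lemma dotProduct_sum_transpose_mulVec_le {ι κ : Type*} [Fintype ι] [Fintype κ] {nd : κ → Type*}
    [∀ i, Fintype (nd i)] {A : Matrix ι ι ℝ} (R : ∀ i, Matrix (nd i) ι ℝ) {k₀ c : ℝ}
    (hk₀ : 0 ≤ k₀)
    (hk₀bound : ∀ U : ∀ i, nd i → ℝ,
      (A *ᵥ (∑ i, (R i)ᵀ *ᵥ U i)) ⬝ᵥ (∑ i, (R i)ᵀ *ᵥ U i)
        ≤ k₀ * ∑ i, (A *ᵥ ((R i)ᵀ *ᵥ U i)) ⬝ᵥ ((R i)ᵀ *ᵥ U i))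
    (V : ∀ i, nd i → ℝ) (hV : ∑ i, ((R i * A * (R i)ᵀ) *ᵥ V i) ⬝ᵥ V i ≤ c) :
    (A *ᵥ (∑ i, (R i)ᵀ *ᵥ V i)) ⬝ᵥ (∑ i, (R i)ᵀ *ᵥ V i) ≤ k₀ * c := by
  refine (hk₀bound V).trans (mul_le_mul_of_nonneg_left (le_of_eq_of_le ?_ hV) hk₀)
  simp only [mulVec_mulVec_dotProduct_mulVec, transpose_transpose]

theorem stmt7_general {n m N : ℕ} (A : Matrix (Fin n) (Fin n) ℝ) (hA : A.PosDef)
    (Z : Matrix (Fin n) (Fin m) ℝ) (hZ : LinearIndependent ℝ Zᵀ)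
    (Et : Matrix (Fin m) (Fin m) ℝ)
    (nd : Fin N → ℕ)
    (R : ∀ i : Fin N, Matrix (Fin (nd i)) (Fin n) ℝ)
    (D : ∀ i : Fin N, Matrix (Fin (nd i)) (Fin (nd i)) ℝ)
    (k₀ k₁ τ : ℝ) (hk₀ : 0 < k₀)
    (hk₀bound : ∀ U : ∀ i : Fin N, Fin (nd i) → ℝ,
      (A *ᵥ (∑ i, (R i)ᵀ *ᵥ U i)) ⬝ᵥ (∑ i, (R i)ᵀ *ᵥ U i)
        ≤ k₀ * ∑ i, (A *ᵥ ((R i)ᵀ *ᵥ U i)) ⬝ᵥ ((R i)ᵀ *ᵥ U i))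
    (π : ∀ j : Fin N, Matrix (Fin (nd j)) (Fin (nd j)) ℝ)
    (hGenEO : ∀ U : Fin n → ℝ,
      ∑ j, ((R j * A * (R j)ᵀ) *ᵥ ((D j) *ᵥ ((1 - π j) *ᵥ ((R j) *ᵥ U)))) ⬝ᵥ
          ((D j) *ᵥ ((1 - π j) *ᵥ ((R j) *ᵥ U)))
        ≤ k₁ * τ * ((A *ᵥ U) ⬝ᵥ U))
    (εA : ℝ)
    (hεA : εA = aOpNorm A (Z * (Zᵀ * A * Z)⁻¹ * Zᵀ * A - Z * Et⁻¹ * Zᵀ * A)) :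
    ∀ U : Fin n → ℝ,
      (A *ᵥ ((Z * (Zᵀ * A * Z)⁻¹ * Zᵀ * A) *ᵥ U
            + (Z * Et⁻¹ * Zᵀ * A - Z * (Zᵀ * A * Z)⁻¹ * Zᵀ * A) *ᵥ
              (∑ j, (R j)ᵀ *ᵥ ((D j) *ᵥ ((1 - π j) *ᵥ ((R j) *ᵥ U)))))) ⬝ᵥ
          ((Z * (Zᵀ * A * Z)⁻¹ * Zᵀ * A) *ᵥ U
            + (Z * Et⁻¹ * Zᵀ * A - Z * (Zᵀ * A * Z)⁻¹ * Zᵀ * A) *ᵥ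
              (∑ j, (R j)ᵀ *ᵥ ((D j) *ᵥ ((1 - π j) *ᵥ ((R j) *ᵥ U)))))
        ≤ (1 + εA * Real.sqrt (k₀ * k₁ * τ)) ^ 2 * ((A *ᵥ U) ⬝ᵥ U) := by
  intro U
  set P := Z * (Zᵀ * A * Z)⁻¹ * Zᵀ * A
  set w := ∑ j, (R j)ᵀ *ᵥ ((D j) *ᵥ ((1 - π j) *ᵥ ((R j) *ᵥ U)))
  have hAU : 0 ≤ (A *ᵥ U) ⬝ᵥ U := aNorm_sq hA.posSemidef U ▸ sq_nonneg _
  have hw : aNorm A w ≤ Real.sqrt (k₀ * k₁ * τ) * aNorm A U := by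
    rw [aNorm, aNorm, ← Real.sqrt_mul' _ hAU, mul_assoc k₀, mul_assoc k₀]
    exact Real.sqrt_le_sqrt (dotProduct_sum_transpose_mulVec_le R hk₀.le hk₀bound _ (hGenEO U))
  have hcorrection : aNorm A ((Z * Et⁻¹ * Zᵀ * A - P) *ᵥ w) ≤ εA * aNorm A w := by
    rw [← neg_sub, neg_mulVec, aNorm_neg, hεA]
    exact aNorm_mulVec_le_aOpNorm hA _ w
  have hF : aNorm A (P *ᵥ U + (Z * Et⁻¹ * Zᵀ * A - P) *ᵥ w)
      ≤ (1 + εA * Real.sqrt (k₀ * k₁ * τ)) * aNorm A U :=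
    calc _ ≤ aNorm A (P *ᵥ U) + aNorm A ((Z * Et⁻¹ * Zᵀ * A - P) *ᵥ w) :=
          aNorm_add_le hA.posSemidef _ _
      _ ≤ aNorm A U + εA * (Real.sqrt (k₀ * k₁ * τ) * aNorm A U) :=
          add_le_add (aNorm_coarseProjection_le hA (mulVec_injective_iff.mpr hZ) U)
            (hcorrection.trans (mul_le_mul_of_nonneg_left hw (hεA ▸ aOpNorm_nonneg A _)))
      _ = _ := by ring
  rw [← aNorm_sq hA.posSemidef, ← aNorm_sq hA.posSemidef U, ← mul_pow]
  exact pow_le_pow_left₀ (aNorm_nonneg A _) hF 2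

/-- Stable decomposition bound for GenEO with inexact coarse solve:
with partition of unity `∑ R_iᵀ D_i R_i = I`, the `k₀`-bound, and the GenEO bound
`∑_j ⟨R_j A R_jᵀ D_j (I − π̃_j) R_j U, D_j (I − π̃_j) R_j U⟩ ≤ k₁ τ ⟨A U, U⟩`, setting
`F U := P₀ U + (P̃₀ − P₀) ∑_j R_jᵀ D_j (I − π̃_j) R_j U` and `ε_A := ‖P₀ − P̃₀‖_A`,
one has `⟨A (F U), F U⟩ ≤ (1 + ε_A √(k₀ k₁ τ))² ⟨A U, U⟩` for all `U`. -/
theorem stmt7 {n m N : ℕ} (A : Matrix (Fin n) (Fin n) ℝ) (hA : A.PosDef)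
    (Z : Matrix (Fin n) (Fin m) ℝ) (hZ : LinearIndependent ℝ Zᵀ)
    (Et : Matrix (Fin m) (Fin m) ℝ) (hEt : Et.PosDef)
    (nd : Fin N → ℕ)
    (R : ∀ i : Fin N, Matrix (Fin (nd i)) (Fin n) ℝ)
    (D : ∀ i : Fin N, Matrix (Fin (nd i)) (Fin (nd i)) ℝ)
    (hD : ∀ i, (D i).IsDiag)
    (k₀ k₁ τ : ℝ) (hk₀ : 0 < k₀) (hk₁ : 0 < k₁) (hτ : 0 < τ)
    (hPOU : ∑ i, (R i)ᵀ * D i * R i = (1 : Matrix (Fin n) (Fin n) ℝ))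
    (hk₀bound : ∀ U : ∀ i : Fin N, Fin (nd i) → ℝ,
      (A *ᵥ (∑ i, (R i)ᵀ *ᵥ U i)) ⬝ᵥ (∑ i, (R i)ᵀ *ᵥ U i)
        ≤ k₀ * ∑ i, (A *ᵥ ((R i)ᵀ *ᵥ U i)) ⬝ᵥ ((R i)ᵀ *ᵥ U i))
    (π : ∀ j : Fin N, Matrix (Fin (nd j)) (Fin (nd j)) ℝ)
    (hGenEO : ∀ U : Fin n → ℝ,
      ∑ j, ((R j * A * (R j)ᵀ) *ᵥ ((D j) *ᵥ ((1 - π j) *ᵥ ((R j) *ᵥ U)))) ⬝ᵥ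
          ((D j) *ᵥ ((1 - π j) *ᵥ ((R j) *ᵥ U)))
        ≤ k₁ * τ * ((A *ᵥ U) ⬝ᵥ U))
    (εA : ℝ)
    (hεA : εA = aOpNorm A (Z * (Zᵀ * A * Z)⁻¹ * Zᵀ * A - Z * Et⁻¹ * Zᵀ * A)) :
    ∀ U : Fin n → ℝ,
      (A *ᵥ ((Z * (Zᵀ * A * Z)⁻¹ * Zᵀ * A) *ᵥ U
            + (Z * Et⁻¹ * Zᵀ * A - Z * (Zᵀ * A * Z)⁻¹ * Zᵀ * A) *ᵥ
              (∑ j, (R j)ᵀ *ᵥ ((D j) *ᵥ ((1 - π j) *ᵥ ((R j) *ᵥ U)))))) ⬝ᵥ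
          ((Z * (Zᵀ * A * Z)⁻¹ * Zᵀ * A) *ᵥ U
            + (Z * Et⁻¹ * Zᵀ * A - Z * (Zᵀ * A * Z)⁻¹ * Zᵀ * A) *ᵥ
              (∑ j, (R j)ᵀ *ᵥ ((D j) *ᵥ ((1 - π j) *ᵥ ((R j) *ᵥ U)))))
        ≤ (1 + εA * Real.sqrt (k₀ * k₁ * τ)) ^ 2 * ((A *ᵥ U) ⬝ᵥ U) :=
  stmt7_general A hA Z hZ Et nd R D k₀ k₁ τ hk₀ hk₀bound π hGenEO εA hεA
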